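/- arXiv:1607.03280 — 2 statements merged into one kernel-verified Lean document; each statement's English description precedes it below -/
import Mathlib

section
/- Let μ ∈ ℝ, σ > 0, and γ(t) = 10^{(√2 σ t + μ)/10}. Then for every s ≥ 0, ∫₀^∞ exp(−s g) · ((1/√π) ∫_{−∞}^{∞} (1/γ(t)) exp(−g/γ(t)) exp(−t²) dt) dg = (1/√π) ∫_{−∞}^{∞} exp(−t²)/(1 + s γ(t)) dt. -/
/-!
For fixed `t` the integrand in `g` is the exponential density with mean `γ(t)`, whose Laplace
transform is `1 / (1 + s γ(t))`. Fubini applies because, integrated in `g` first, the absolute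
value of the joint integrand gives `e^{-t²} / (1 + s γ(t)) ≤ e^{-t²}`, which is integrable.
-/

open Real MeasureTheory Set

section ExponentialDensity

variable {a s : ℝ}

lemma exp_mul_exponentialDensity_eq (c g : ℝ) :
    exp (-s * g) * ((1 / a) * exp (-g / a) * c) = c / a * exp (-(s + 1 / a) * g) := by
  rw [show -(s + 1 / a) * g = -s * g + -g / a by ring, exp_add]
  ring

lemma integrableOn_exp_mul_exponentialDensity (ha : 0 < a) (hs : 0 ≤ s) (c : ℝ) :
    IntegrableOn (fun g => exp (-s * g) * ((1 / a) * exp (-g / a) * c)) (Ioi 0) := by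
  simp_rw [exp_mul_exponentialDensity_eq]
  exact (exp_neg_integrableOn_Ioi 0 (by positivity)).const_mul _

lemma integral_exp_mul_exponentialDensity (ha : 0 < a) (hs : 0 ≤ s) (c : ℝ) :
    ∫ g in Ioi 0, exp (-s * g) * ((1 / a) * exp (-g / a) * c) = c / (1 + s * a) := by
  have hr : -(s + 1 / a) < 0 := by
    have : 0 < s + 1 / a := by positivity
    linarith
  simp_rw [exp_mul_exponentialDensity_eq]
  rw [integral_const_mul, integral_exp_mul_Ioi hr, mul_zero, exp_zero]
  field_simp
  ring

end ExponentialDensity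

section Fubini

variable {α : Type*} [MeasurableSpace α] {ν : Measure α} {γ w : α → ℝ} {s : ℝ}

lemma integrable_div_one_add_mul (hγ : Measurable γ) (hγ_pos : ∀ t, 0 < γ t) (hs : 0 ≤ s)
    (hw : Integrable w ν) : Integrable (fun t => w t / (1 + s * γ t)) ν := by
  have hden : Measurable fun t => 1 + s * γ t := by fun_prop
  refine hw.norm.mono' (hw.aestronglyMeasurable.div₀ hden.aestronglyMeasurable)
    (.of_forall fun t => ?_)
  have h1 : 1 ≤ 1 + s * γ t := by
    have := mul_nonneg hs (hγ_pos t).le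
    linarith
  rw [norm_div, Real.norm_of_nonneg (show 0 ≤ 1 + s * γ t by linarith)]
  exact div_le_self (norm_nonneg (w t)) h1

variable [SFinite ν]

lemma integrable_exp_mul_exponentialMixture (hγ : Measurable γ) (hγ_pos : ∀ t, 0 < γ t)
    (hs : 0 ≤ s) (hw : Integrable w ν) :
    Integrable (fun p : ℝ × α => exp (-s * p.1) * ((1 / γ p.2) * exp (-p.1 / γ p.2) * w p.2))
      ((volume.restrict (Ioi 0)).prod ν) := by
  have hmeas : AEStronglyMeasurable
      (fun p : ℝ × α => exp (-s * p.1) * ((1 / γ p.2) * exp (-p.1 / γ p.2) * w p.2))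
      ((volume.restrict (Ioi 0)).prod ν) := by
    have hγ' : Measurable fun p : ℝ × α => γ p.2 := hγ.comp measurable_snd
    exact (by fun_prop : Measurable fun p : ℝ × α => exp (-s * p.1)).aestronglyMeasurable.mul
      (((by fun_prop : Measurable fun p : ℝ × α => 1 / γ p.2).aestronglyMeasurable.mul
        (by fun_prop : Measurable fun p : ℝ × α => exp (-p.1 / γ p.2)).aestronglyMeasurable).mul
        hw.aestronglyMeasurable.comp_snd)
  refine (integrable_prod_iff' hmeas).2 ⟨.of_forall fun t =>
    integrableOn_exp_mul_exponentialDensity (hγ_pos t) hs (w t), ?_⟩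
  have hnorm : ∀ t, ∫ g in Ioi 0, ‖exp (-s * g) * ((1 / γ t) * exp (-g / γ t) * w t)‖ =
      ‖w t‖ / (1 + s * γ t) := fun t => by
    rw [← integral_exp_mul_exponentialDensity (hγ_pos t) hs ‖w t‖]
    refine setIntegral_congr_fun measurableSet_Ioi fun g _ => ?_
    simp only [norm_mul, Real.norm_of_nonneg (exp_pos _).le,
      Real.norm_of_nonneg (one_div_pos.2 (hγ_pos t)).le]
  exact (integrable_div_one_add_mul hγ hγ_pos hs hw.norm).congr
    (.of_forall fun t => (hnorm t).symm)

/-- The Laplace transform of a mixture of exponential laws with means `γ t`, weighted by `w`. -/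
theorem integral_exp_mul_integral_exponentialMixture (hγ : Measurable γ)
    (hγ_pos : ∀ t, 0 < γ t) (hs : 0 ≤ s) (hw : Integrable w ν) :
    ∫ g in Ioi 0, exp (-s * g) * ∫ t, (1 / γ t) * exp (-g / γ t) * w t ∂ν =
      ∫ t, w t / (1 + s * γ t) ∂ν := by
  simp_rw [← integral_const_mul]
  rw [integral_integral_swap (integrable_exp_mul_exponentialMixture hγ hγ_pos hs hw)]
  exact integral_congr_ae (.of_forall fun t =>
    integral_exp_mul_exponentialDensity (hγ_pos t) hs _)

end Fubini

theorem suzuki_mgf_general (μ σ : ℝ) :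
    ∀ s : ℝ, 0 ≤ s →
      (∫ g in Set.Ioi (0 : ℝ),
          Real.exp (-s * g) *
            ((1 / Real.sqrt π) *
              ∫ t : ℝ, (1 / (10 : ℝ) ^ ((Real.sqrt 2 * σ * t + μ) / 10)) *
                Real.exp (-g / (10 : ℝ) ^ ((Real.sqrt 2 * σ * t + μ) / 10)) *
                Real.exp (-t ^ 2))) =
        (1 / Real.sqrt π) *
          ∫ t : ℝ, Real.exp (-t ^ 2) / (1 + s * (10 : ℝ) ^ ((Real.sqrt 2 * σ * t + μ) / 10)) := by
  intro s hs
  have hγ : Measurable fun t : ℝ => (10 : ℝ) ^ ((Real.sqrt 2 * σ * t + μ) / 10) := by fun_prop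
  have hw : Integrable fun t : ℝ => Real.exp (-t ^ 2) := by
    simpa using integrable_exp_neg_mul_sq one_pos
  simp_rw [mul_left_comm (Real.exp _), integral_const_mul]
  rw [integral_exp_mul_integral_exponentialMixture hγ (fun t => by positivity) hs hw]

/-- Exact moment generating function (Laplace transform) of the Rayleigh–Lognormal
(Suzuki) fading density with `γ(t) = 10^{(√2 σ t + μ)/10}`:
`∫₀^∞ e^{−sg} (1/√π) ∫_ℝ (1/γ(t)) e^{−g/γ(t)} e^{−t²} dt dg
  = (1/√π) ∫_ℝ e^{−t²}/(1 + s γ(t)) dt`. -/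
theorem suzuki_mgf (μ σ : ℝ) (hσ : 0 < σ) :
    ∀ s : ℝ, 0 ≤ s →
      (∫ g in Set.Ioi (0 : ℝ),
          Real.exp (-s * g) *
            ((1 / Real.sqrt π) *
              ∫ t : ℝ, (1 / (10 : ℝ) ^ ((Real.sqrt 2 * σ * t + μ) / 10)) *
                Real.exp (-g / (10 : ℝ) ^ ((Real.sqrt 2 * σ * t + μ) / 10)) *
                Real.exp (-t ^ 2))) =
        (1 / Real.sqrt π) *
          ∫ t : ℝ, Real.exp (-t ^ 2) / (1 + s * (10 : ℝ) ^ ((Real.sqrt 2 * σ * t + μ) / 10)) :=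
  suzuki_mgf_general μ σ
end

section
/- Let λ > 0, ε ≥ 0, N ∈ ℕ, and for n = 1,…,N let wₙ > 0 and fₙ ≥ 0. Then ∫₀^∞ 2πλ r exp(−πλ r²) · Σₙ (wₙ/√π) exp(−πλ ε r² fₙ) dr = Σₙ (wₙ/√π) · 1/(1 + ε fₙ). In particular, the value of this integral does not depend on λ. -/
open Real MeasureTheory

/-! With `a = πλ`, the weight `2aρ e^{-aρ²}` times the `n`-th summand `e^{-aεfₙρ²}` is
`2aρ e^{-a(1+εfₙ)ρ²}`, whose integral over `(0, ∞)` is `1 / (1 + εfₙ)`: the density `λ`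
cancels against the Gaussian normalisation `1 / (2a(1+εfₙ))`. -/

theorem integral_Ioi_mul_exp_neg_mul_sq {b : ℝ} (hb : 0 < b) :
    ∫ r in Set.Ioi (0 : ℝ), r * exp (-b * r ^ 2) = (2 * b)⁻¹ := by
  apply Complex.ofReal_injective
  rw [← integral_complex_ofReal, Complex.ofReal_inv, Complex.ofReal_mul, Complex.ofReal_ofNat,
    ← integral_mul_cexp_neg_mul_sq (by simpa using hb)]
  push_cast
  rfl

section Rayleigh

variable {a s : ℝ}

theorem rayleigh_mul_exp_neg_mul_sq_eq (r : ℝ) :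
    2 * a * r * exp (-(a * r ^ 2)) * exp (-(a * s * r ^ 2)) =
      2 * a * (r * exp (-(a * (1 + s)) * r ^ 2)) := by
  rw [mul_assoc, ← exp_add]
  ring_nf

theorem integrableOn_rayleigh_mul_exp_neg_mul_sq (ha : 0 < a) (hs : 0 < 1 + s) :
    IntegrableOn (fun r => 2 * a * r * exp (-(a * r ^ 2)) * exp (-(a * s * r ^ 2)))
      (Set.Ioi 0) := by
  simp_rw [rayleigh_mul_exp_neg_mul_sq_eq]
  exact ((integrable_mul_exp_neg_mul_sq (mul_pos ha hs)).const_mul _).integrableOn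

theorem integral_rayleigh_mul_exp_neg_mul_sq (ha : 0 < a) (hs : 0 < 1 + s) :
    ∫ r in Set.Ioi (0 : ℝ), 2 * a * r * exp (-(a * r ^ 2)) * exp (-(a * s * r ^ 2)) =
      1 / (1 + s) := by
  simp_rw [rayleigh_mul_exp_neg_mul_sq_eq]
  rw [integral_const_mul, integral_Ioi_mul_exp_neg_mul_sq (mul_pos ha hs)]
  field_simp

end Rayleigh

theorem average_coverage_high_snr_general (lam ε : ℝ) (hlam : 0 < lam) (hε : 0 ≤ ε)
    (N : ℕ) (w f : Fin N → ℝ) (hf : ∀ n, 0 ≤ f n) :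
    (∫ r in Set.Ioi (0 : ℝ),
        2 * π * lam * r * Real.exp (-(π * lam * r ^ 2)) *
          ∑ n, (w n / Real.sqrt π) * Real.exp (-(π * lam * ε * r ^ 2 * f n))) =
      ∑ n, (w n / Real.sqrt π) * (1 / (1 + ε * f n)) := by
  have ha : 0 < π * lam := mul_pos pi_pos hlam
  have hs (n : Fin N) : 0 < 1 + ε * f n := by linarith [mul_nonneg hε (hf n)]
  have hsummand (n : Fin N) (r : ℝ) :
      2 * π * lam * r * exp (-(π * lam * r ^ 2)) *
          ((w n / √π) * exp (-(π * lam * ε * r ^ 2 * f n))) =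
        (w n / √π) * (2 * (π * lam) * r * exp (-(π * lam * r ^ 2)) *
          exp (-(π * lam * (ε * f n) * r ^ 2))) := by
    ring_nf
  simp_rw [Finset.mul_sum, hsummand]
  rw [integral_finsetSum _ fun n _ =>
    (integrableOn_rayleigh_mul_exp_neg_mul_sq ha (hs n)).const_mul _]
  simp_rw [integral_const_mul, integral_rayleigh_mul_exp_neg_mul_sq ha (hs _)]

/-- Average coverage probability of a typical user in the interference-limited
Poisson cellular network:
`∫₀^∞ 2πλ r e^{−πλr²} Σₙ (wₙ/√π) e^{−πλ ε r² fₙ} dr = Σₙ (wₙ/√π)/(1 + ε fₙ)`,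
independent of the base-station density `λ`. -/
theorem average_coverage_high_snr (lam ε : ℝ) (hlam : 0 < lam) (hε : 0 ≤ ε)
    (N : ℕ) (w f : Fin N → ℝ) (hw : ∀ n, 0 < w n) (hf : ∀ n, 0 ≤ f n) :
    (∫ r in Set.Ioi (0 : ℝ),
        2 * π * lam * r * Real.exp (-(π * lam * r ^ 2)) *
          ∑ n, (w n / Real.sqrt π) * Real.exp (-(π * lam * ε * r ^ 2 * f n))) =
      ∑ n, (w n / Real.sqrt π) * (1 / (1 + ε * f n)) :=
  average_coverage_high_snr_general lam ε hlam hε N w f hf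
end
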